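/- The square spiral trajectory S : ℕ → ℤ×ℤ (defined by S(0) = (0,0) and consecutive loops of 2p−1 steps North, 2p−1 steps West, 2p steps South, 2p steps East for p = 1, 2, ...) is injective: it visits a new node at every step; i.e., S(t) ≠ S(t') for all t ≠ t'. -/

import Mathlib

/-!
Loop `p + 1` of the spiral starts at time `4p² + 2p` at the corner `(p, -p)`, and its steps
before the last one visit, each once, the points of the shell
`max (x, -x - 1, y - 1, -y - 1) = p`; it ends at `(p + 1, -(p + 1))`, the start of the next loop.
The shells are disjoint, so the time `t` can be recovered from the position `spiral t`.
-/

/-- Direction of global step `t` of the square spiral, where `p` means the agent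
is currently in loop number `p+1` (loop `p+1` consists of `2p+1` steps North,
`2p+1` steps West, `2p+2` steps South, `2p+2` steps East, total `8p+6` steps). -/
def spiralDir (t p : ℕ) : ℤ × ℤ :=
  if h : t < 8 * p + 6 then
    if t < 2 * p + 1 then (0, 1)
    else if t < 4 * p + 2 then (-1, 0)
    else if t < 6 * p + 4 then (0, -1)
    else (1, 0)
  else spiralDir (t - (8 * p + 6)) (p + 1)
termination_by t
decreasing_by omega

/-- The square spiral trajectory starting at the origin: position after `t` steps. -/
def spiral (t : ℕ) : ℤ × ℤ := ∑ i ∈ Finset.range t, spiralDir i 0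

def spiralLoopStart (p : ℕ) : ℕ := 4 * p ^ 2 + 2 * p

lemma spiralLoopStart_succ (p : ℕ) :
    spiralLoopStart (p + 1) = spiralLoopStart p + (8 * p + 6) := by
  unfold spiralLoopStart
  ring

lemma exists_eq_spiralLoopStart_add (t : ℕ) :
    ∃ p s, s < 8 * p + 6 ∧ t = spiralLoopStart p + s := by
  induction t with
  | zero => exact ⟨0, 0, by omega, rfl⟩
  | succ t ih =>
    obtain ⟨p, s, hs, rfl⟩ := ih
    by_cases hlast : s + 1 < 8 * p + 6
    · exact ⟨p, s + 1, hlast, by omega⟩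
    · exact ⟨p + 1, 0, by omega, by rw [spiralLoopStart_succ]; omega⟩

/-- Position after `s` steps of loop `p + 1`, for `s ≤ 8 * p + 6`. -/
def spiralLoopPos (p s : ℕ) : ℤ × ℤ :=
  if s ≤ 2 * p + 1 then ((p : ℤ), (s : ℤ) - p)
  else if s ≤ 4 * p + 2 then (3 * (p : ℤ) + 1 - s, (p : ℤ) + 1)
  else if s ≤ 6 * p + 4 then (-((p : ℤ) + 1), 5 * (p : ℤ) + 3 - s)
  else ((s : ℤ) - (7 * (p : ℤ) + 5), -((p : ℤ) + 1))

lemma spiralLoopPos_last (p : ℕ) : spiralLoopPos p (8 * p + 6) = spiralLoopPos (p + 1) 0 := by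
  simp only [spiralLoopPos, Prod.ext_iff]
  split_ifs <;> push_cast <;> omega

lemma spiralLoopPos_add_spiralDir {p s : ℕ} (hs : s < 8 * p + 6) :
    spiralLoopPos p s + spiralDir s p = spiralLoopPos p (s + 1) := by
  rw [spiralDir, dif_pos hs]
  unfold spiralLoopPos
  split_ifs <;> simp only [Prod.mk_add_mk, Prod.ext_iff] <;> push_cast <;> omega

lemma spiralLoopPos_inj {p s p' s' : ℕ} (hs : s < 8 * p + 6) (hs' : s' < 8 * p' + 6)
    (h : spiralLoopPos p s = spiralLoopPos p' s') : p = p' ∧ s = s' := by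
  unfold spiralLoopPos at h
  split_ifs at h <;> obtain ⟨hx, hy⟩ := Prod.ext_iff.mp h <;> omega

lemma spiralDir_add_loop (s p : ℕ) : spiralDir (s + (8 * p + 6)) p = spiralDir s (p + 1) := by
  rw [spiralDir, dif_neg (by omega), Nat.add_sub_cancel]

lemma spiralDir_spiralLoopStart_add (p s : ℕ) :
    spiralDir (spiralLoopStart p + s) 0 = spiralDir s p := by
  induction p generalizing s with
  | zero => simp [spiralLoopStart]
  | succ p ih =>
    rw [spiralLoopStart_succ, add_assoc, add_comm (8 * p + 6), ih, spiralDir_add_loop]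

lemma spiral_succ (t : ℕ) : spiral (t + 1) = spiral t + spiralDir t 0 :=
  Finset.sum_range_succ _ t

lemma spiral_spiralLoopStart_add {p s : ℕ} (hs : s ≤ 8 * p + 6) :
    spiral (spiralLoopStart p + s) = spiralLoopPos p s := by
  have traverse : ∀ p, spiral (spiralLoopStart p) = spiralLoopPos p 0 →
      ∀ s ≤ 8 * p + 6, spiral (spiralLoopStart p + s) = spiralLoopPos p s := by
    intro p hstart s hs
    induction s with
    | zero => exact hstart
    | succ s ih =>
      rw [← add_assoc, spiral_succ, spiralDir_spiralLoopStart_add, ih (by omega),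
        spiralLoopPos_add_spiralDir (by omega)]
  suffices start : ∀ p, spiral (spiralLoopStart p) = spiralLoopPos p 0 from
    traverse p (start p) s hs
  intro p
  induction p with
  | zero => simp [spiral, spiralLoopStart, spiralLoopPos, Prod.zero_eq_mk]
  | succ p ih => rw [spiralLoopStart_succ, traverse p ih _ le_rfl, spiralLoopPos_last]

/-- The square spiral visits a new node at every step: it is injective. -/
theorem spiral_injective : Function.Injective spiral := by
  intro t₁ t₂ h
  obtain ⟨p, s, hs, rfl⟩ := exists_eq_spiralLoopStart_add t₁
  obtain ⟨p', s', hs', rfl⟩ := exists_eq_spiralLoopStart_add t₂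
  rw [spiral_spiralLoopStart_add hs.le, spiral_spiralLoopStart_add hs'.le] at h
  obtain ⟨rfl, rfl⟩ := spiralLoopPos_inj hs hs' h
  rfl
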